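/- arXiv:2309.13440 — 2 statements merged into one kernel-verified Lean document; each statement's English description precedes it below -/
import Mathlib

section
/- The family of operators { Q̃^{(g_1)}_1 Q̃^{(g_2)}_2 ⋯ Q̃^{(g_{n−1})}_{n−1} · P^{h_1}_1 P^{h_2}_2 ⋯ P^{h_n}_n : (g_1,…,g_{n−1}) ∈ G^{n−1}, (h_1,…,h_n) ∈ G^n } is a ℂ-basis of the rough boundary algebra 𝔇ⁿ_rough; in particular dim_ℂ 𝔇ⁿ_rough = |G|^{2n−1}. -/
set_option linter.unusedSectionVars false
set_option maxHeartbeats 1000000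
set_option synthInstance.maxHeartbeats 400000
open scoped Pointwise


noncomputable section

open scoped BigOperators

/-- The Hilbert space `H_n = ℂ[G]^{⊗ n}`, realized as functions `G^n → ℂ`;
the basis ket `|g₁,…,g_n⟩` is the indicator function of `(g₁,…,g_n)`. -/
abbrev Hn (G : Type) (n : ℕ) : Type := (Fin n → G) → ℂ

variable (G : Type) [Group G] [Fintype G] [DecidableEq G] (n : ℕ)

/-- Diagonal operator with diagonal entries `c` (in the ket basis). -/
def diagOp (c : (Fin n → G) → ℂ) : Module.End ℂ (Hn G n) where
  toFun f := fun x => c x * f x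
  map_add' f g := by funext x; simp only [Pi.add_apply]; ring
  map_smul' r f := by
    funext x
    simp only [Pi.smul_apply, smul_eq_mul, RingHom.id_apply]
    ring

/-- The operator sending the ket `|y⟩` to the ket `|σ y⟩`, where `τ = σ⁻¹`. -/
def permOp (τ : (Fin n → G) → (Fin n → G)) : Module.End ℂ (Hn G n) :=
  LinearMap.funLeft ℂ ℂ τ

/-- `P^h_i`: projection onto kets whose `i`-th label equals `h`. -/
def Pop (i : Fin n) (h : G) : Module.End ℂ (Hn G n) :=
  diagOp G n fun x => if x i = h then 1 else 0

/-- `Q̃^{(g)}` at sites `i` and `j` (used with `j = i + 1`):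
`|…, g_i, g_j, …⟩ ↦ |…, g_i g⁻¹, g g_j, …⟩`. -/
def Qop (i j : Fin n) (g : G) : Module.End ℂ (Hn G n) :=
  permOp G n fun x =>
    Function.update (Function.update x i (x i * g)) j (g⁻¹ * x j)

/-- Generators `P^h_i` and `Q̃^{(g)}_i` of the rough boundary algebra. -/
def roughGens : Set (Module.End ℂ (Hn G n)) :=
  {T | ∃ (i : Fin n) (h : G), T = Pop G n i h} ∪
  {T | ∃ (i j : Fin n) (g : G), (i : ℕ) + 1 = (j : ℕ) ∧ T = Qop G n i j g}

/-- The rough boundary algebra `𝔇ⁿ_rough`. -/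
def DRough : Subalgebra ℂ (Module.End ℂ (Hn G n)) :=
  Algebra.adjoin ℂ (roughGens G n)

/-- The site `i` (0-indexed) of a neighboring pair, as an element of `Fin n`. -/
def idx1 {n : ℕ} (i : Fin (n - 1)) : Fin n := ⟨i, by have := i.isLt; omega⟩

/-- The site `i + 1` of a neighboring pair, as an element of `Fin n`. -/
def idx2 {n : ℕ} (i : Fin (n - 1)) : Fin n := ⟨(i : ℕ) + 1, by have := i.isLt; omega⟩

/-- The word `Q̃^{(q₁)}_1 ⋯ Q̃^{(q_{n-1})}_{n-1} · P^{p₁}_1 ⋯ P^{p_n}_n`. -/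
def roughWord (q : Fin (n - 1) → G) (p : Fin n → G) : Module.End ℂ (Hn G n) :=
  (List.ofFn fun i : Fin (n - 1) => Qop G n (idx1 i) (idx2 i) (q i)).prod *
  (List.ofFn fun i : Fin n => Pop G n i (p i)).prod


/-! ### Auxiliary development -/

/-- Basis ket. -/
def ket (p : Fin n → G) : Hn G n := fun w => if w = p then 1 else 0

/-- Matrix unit `|y⟩⟨z|`. -/
def ketbra (y z : Fin n → G) : Module.End ℂ (Hn G n) where
  toFun f := fun w => if w = y then f z else 0
  map_add' f g := by funext w; by_cases h : w = y <;> simp [h]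
  map_smul' c f := by funext w; by_cases h : w = y <;> simp [h]

lemma ketbra_apply (y z : Fin n → G) (f : Hn G n) (w : Fin n → G) :
    ketbra G n y z f w = if w = y then f z else 0 := rfl

lemma diagOp_apply (c : (Fin n → G) → ℂ) (f : Hn G n) (x : Fin n → G) :
    diagOp G n c f x = c x * f x := rfl

lemma Qop_apply (i j : Fin n) (g : G) (f : Hn G n) (y : Fin n → G) :
    Qop G n i j g f y
      = f (Function.update (Function.update y i (y i * g)) j (g⁻¹ * y j)) := rfl

lemma tau_eq_iff (i j : Fin n) (hij : i ≠ j) (g : G) (w p : Fin n → G) :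
    Function.update (Function.update w i (w i * g)) j (g⁻¹ * w j) = p
      ↔ w = Function.update (Function.update p i (p i * g⁻¹)) j (g * p j) := by
  constructor
  · intro h; subst h
    funext k
    rcases eq_or_ne k j with rfl | hkj
    · simp [Function.update_self, Function.update_of_ne hij.symm, Function.update_of_ne]
    · rcases eq_or_ne k i with rfl | hki
      · simp [Function.update_self, Function.update_of_ne hij, Function.update_of_ne hkj]
      · simp [Function.update_of_ne hkj, Function.update_of_ne hki]
  · intro h; subst h
    funext k
    rcases eq_or_ne k j with rfl | hkj
    · simp [Function.update_self, Function.update_of_ne hij.symm, Function.update_of_ne]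
    · rcases eq_or_ne k i with rfl | hki
      · simp [Function.update_self, Function.update_of_ne hij, Function.update_of_ne hkj]
      · simp [Function.update_of_ne hkj, Function.update_of_ne hki]

lemma Qop_ket (i j : Fin n) (hij : i ≠ j) (g : G) (p : Fin n → G) :
    Qop G n i j g (ket G n p)
      = ket G n (Function.update (Function.update p i (p i * g⁻¹)) j (g * p j)) := by
  funext w
  rw [Qop_apply]
  show (if _ = p then (1:ℂ) else 0) = (if w = _ then (1:ℂ) else 0)
  exact if_congr (tau_eq_iff G n i j hij g w p) rfl rfl

lemma Qop_mul_ketbra (i j : Fin n) (hij : i ≠ j) (g : G) (p : Fin n → G) :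
    Qop G n i j g * ketbra G n p p
      = ketbra G n (Function.update (Function.update p i (p i * g⁻¹)) j (g * p j)) p := by
  apply LinearMap.ext; intro f; funext w
  rw [Module.End.mul_apply, Qop_apply, ketbra_apply, ketbra_apply]
  exact if_congr (tau_eq_iff G n i j hij g w p) rfl rfl

lemma diagOp_mul (c d : (Fin n → G) → ℂ) :
    diagOp G n c * diagOp G n d = diagOp G n fun x => c x * d x := by
  apply LinearMap.ext; intro f; funext x
  simp [Module.End.mul_apply, diagOp_apply, mul_assoc]

lemma diagOp_one : diagOp G n (fun _ => 1) = 1 := by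
  apply LinearMap.ext; intro f; funext x
  simp [diagOp_apply]

lemma diag_list_prod (N : ℕ) (c : Fin N → ((Fin n → G) → ℂ)) :
    (List.ofFn fun i => diagOp G n (c i)).prod = diagOp G n fun x => ∏ i, c i x := by
  induction N with
  | zero =>
      simp only [List.ofFn_zero, List.prod_nil, Finset.univ_eq_empty, Finset.prod_empty]
      exact (diagOp_one G n).symm
  | succ N ih =>
      rw [List.ofFn_succ, List.prod_cons, ih, diagOp_mul]
      congr 1
      funext x
      rw [Fin.prod_univ_succ]

lemma Pprod_eq (p : Fin n → G) :
    (List.ofFn fun i : Fin n => Pop G n i (p i)).prod = ketbra G n p p := by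
  have h : (List.ofFn fun i : Fin n => Pop G n i (p i))
      = List.ofFn fun i : Fin n => diagOp G n (fun x => if x i = p i then 1 else 0) := rfl
  rw [h, diag_list_prod]
  apply LinearMap.ext; intro f; funext w
  rw [diagOp_apply, ketbra_apply, Finset.prod_boole]
  by_cases hw : w = p
  · subst hw; simp
  · have h2 : ¬ ∀ i ∈ Finset.univ, w i = p i := by
      simpa [funext_iff] using hw
    rw [if_neg h2, if_neg hw, zero_mul]

/-- Extend a `Fin N`-indexed family to `ℕ` by `1`. -/
def nth {N : ℕ} (q : Fin N → G) (k : ℕ) : G := if h : k < N then q ⟨k, h⟩ else 1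

/-- Result of applying the `Q`-operators at sites `s,…,s+N-1` to the ket of `p`. -/
def Rm (s N : ℕ) (q : ℕ → G) (p : Fin n → G) : Fin n → G := fun j =>
  (if s < (j:ℕ) ∧ (j:ℕ) ≤ s + N then q ((j:ℕ) - 1) else 1) * p j *
  (if s ≤ (j:ℕ) ∧ (j:ℕ) < s + N then (q (j:ℕ))⁻¹ else 1)

/-- The list of `Q`-operators at positions `s, s+1, …, s+N-1`. -/
def Qfrom (s N : ℕ) (hle : s + N ≤ n - 1) (hn : 1 ≤ n) (q : ℕ → G) :
    List (Module.End ℂ (Hn G n)) :=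
  List.ofFn fun i : Fin N =>
    Qop G n ⟨s + (i:ℕ), by have := i.isLt; omega⟩
      ⟨s + (i:ℕ) + 1, by have := i.isLt; omega⟩ (q (s + (i:ℕ)))

lemma Qop_congr {i i' j j' : Fin n} {g g' : G} (hi : (i:ℕ) = (i':ℕ))
    (hj : (j:ℕ) = (j':ℕ)) (hg : g = g') : Qop G n i j g = Qop G n i' j' g' := by
  have h1 : i = i' := Fin.ext hi
  have h2 : j = j' := Fin.ext hj
  subst h1; subst h2; subst hg; rfl

lemma Qfrom_succ (s N : ℕ) (hle : s + (N + 1) ≤ n - 1) (hn : 1 ≤ n) (q : ℕ → G) :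
    Qfrom G n s (N+1) hle hn q
      = Qop G n ⟨s, by omega⟩ ⟨s + 1, by omega⟩ (q s)
        :: Qfrom G n (s+1) N (by omega) hn q := by
  unfold Qfrom
  rw [List.ofFn_succ]
  refine congrArg₂ List.cons ?_ ?_
  · refine Qop_congr G n ?_ ?_ ?_
    · simp
    · simp
    · refine congrArg q ?_; simp
  · refine congrArg List.ofFn (funext fun i => ?_)
    refine Qop_congr G n ?_ ?_ ?_
    · simp [Fin.val_succ]; omega
    · simp [Fin.val_succ]; omega
    · refine congrArg q ?_
      simp [Fin.val_succ]; omega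

lemma update_Rm (s N : ℕ) (q : ℕ → G) (p : Fin n → G) (a b : Fin n)
    (ha : (a:ℕ) = s) (hb : (b:ℕ) = s+1) :
    Function.update (Function.update (Rm G n (s+1) N q p) a (Rm G n (s+1) N q p a * (q s)⁻¹))
      b (q s * Rm G n (s+1) N q p b) = Rm G n s (N+1) q p := by
  funext j
  rcases eq_or_ne j b with rfl | hjb
  · rw [Function.update_self]
    simp only [Rm]
    split_ifs <;>
      first
        | (exfalso; omega)
        | simp [hb, mul_assoc, Nat.add_sub_cancel]
  · rw [Function.update_of_ne hjb]
    rcases eq_or_ne j a with rfl | hja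
    · rw [Function.update_self]
      simp only [Rm]
      split_ifs <;>
        first
          | (exfalso; omega)
          | simp [ha, mul_assoc, Nat.add_sub_cancel]
    · rw [Function.update_of_ne hja]
      have hvb : (j:ℕ) ≠ s + 1 := fun hc => hjb (Fin.ext (by omega))
      have hva : (j:ℕ) ≠ s := fun hc => hja (Fin.ext (by omega))
      simp only [Rm]
      split_ifs <;>
        first
          | (exfalso; omega)
          | rfl
          | simp [mul_assoc]

lemma Qprod_ket (N : ℕ) : ∀ (s : ℕ) (hle : s + N ≤ n - 1) (hn : 1 ≤ n) (q : ℕ → G)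
    (p : Fin n → G),
    (Qfrom G n s N hle hn q).prod (ket G n p) = ket G n (Rm G n s N q p) := by
  induction N with
  | zero =>
      intro s hle hn q p
      rw [show Qfrom G n s 0 hle hn q = [] from by simp [Qfrom], List.prod_nil,
        Module.End.one_apply]
      refine congrArg (ket G n) ?_
      funext j
      simp only [Rm]
      rw [if_neg (by omega), if_neg (by omega), one_mul, mul_one]
  | succ N ih =>
      intro s hle hn q p
      have hne : (⟨s, by omega⟩ : Fin n) ≠ ⟨s + 1, by omega⟩ := by
        simp only [ne_eq, Fin.mk.injEq]; omega
      rw [Qfrom_succ, List.prod_cons, Module.End.mul_apply, ih (s+1) (by omega) hn q p,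
        Qop_ket G n _ _ hne _ _]
      refine congrArg (ket G n) ?_
      exact update_Rm G n s N q p _ _ rfl rfl

/-- `F(q,p)`, the label of the output ket of `roughWord q p` on input ket `p`. -/
def Fmap (q : Fin (n-1) → G) (p : Fin n → G) : Fin n → G :=
  Rm G n 0 (n-1) (nth G q) p

lemma roughWord_eq (hn : 1 ≤ n) (q : Fin (n-1) → G) (p : Fin n → G) :
    roughWord G n q p = ketbra G n (Fmap G n q p) p := by
  have hq : (List.ofFn fun i : Fin (n - 1) => Qop G n (idx1 i) (idx2 i) (q i))
      = Qfrom G n 0 (n-1) (by omega) hn (nth G q) := by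
    unfold Qfrom
    refine congrArg List.ofFn (funext fun i => ?_)
    refine Qop_congr G n (by simp [idx1]) (by simp [idx2]) ?_
    simp only [nth, Nat.zero_add]
    rw [dif_pos i.isLt]
  unfold roughWord
  rw [hq, Pprod_eq]
  apply LinearMap.ext; intro f; funext w
  rw [Module.End.mul_apply]
  have h1 : ketbra G n p p f = f p • ket G n p := by
    funext u
    rw [ketbra_apply]
    simp only [Pi.smul_apply, ket, smul_eq_mul]
    by_cases hu : u = p <;> simp [hu]
  rw [h1, map_smul, Qprod_ket]
  rw [ketbra_apply]
  simp only [Pi.smul_apply, smul_eq_mul]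
  show f p * ket G n (Rm G n 0 (n-1) (nth G q) p) w = _
  unfold ket Fmap
  by_cases hw : w = Rm G n 0 (n-1) (nth G q) p <;> simp [hw]

/-- Prefix products. -/
def pre (v : Fin n → G) (k : ℕ) : G := ((List.ofFn v).take (k+1)).prod

lemma pre_zero (h : 0 < n) (v : Fin n → G) : pre G n v 0 = v ⟨0, h⟩ := by
  unfold pre
  rw [List.prod_take_succ _ 0 (by simpa using h), List.take_zero, List.prod_nil, one_mul,
    List.getElem_ofFn]

lemma pre_succ (k : ℕ) (h : k + 1 < n) (v : Fin n → G) :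
    pre G n v (k+1) = pre G n v k * v ⟨k+1, h⟩ := by
  unfold pre
  rw [List.prod_take_succ _ (k+1) (by simpa using h)]
  refine congrArg _ ?_
  rw [List.getElem_ofFn]

lemma pre_pred (k : ℕ) (hk : k < n) (h0 : 0 < k) (v : Fin n → G) (x : Fin n)
    (hx : (x:ℕ) = k) : pre G n v k = pre G n v (k-1) * v x := by
  have h1 := pre_succ G n (k-1) (by omega) v
  have h2 : v (⟨k-1+1, by omega⟩ : Fin n) = v x :=
    congrArg v (Fin.ext (by simp only [Fin.val_mk]; omega))
  rw [h2] at h1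
  rw [show k-1+1 = k from by omega] at h1
  exact h1

/-- Inverse parametrization. -/
def Ginv (p y : Fin n → G) : Fin (n-1) → G := fun j =>
  (pre G n y (j:ℕ))⁻¹ * pre G n p (j:ℕ)

lemma nth_lt {N : ℕ} (q : Fin N → G) (k : ℕ) (h : k < N) : nth G q k = q ⟨k, h⟩ := by
  unfold nth; rw [dif_pos h]

lemma nth_ge {N : ℕ} (q : Fin N → G) (k : ℕ) (h : ¬ k < N) : nth G q k = 1 := by
  unfold nth; rw [dif_neg h]

lemma pre_Fmap (hn : 1 ≤ n) (q : Fin (n-1) → G) (p : Fin n → G) :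
    ∀ k, k < n → pre G n (Fmap G n q p) k = pre G n p k * (nth G q k)⁻¹ := by
  intro k
  induction k with
  | zero =>
      intro hk
      rw [pre_zero G n (by omega), pre_zero G n (by omega)]
      show Rm G n 0 (n-1) (nth G q) p ⟨0, by omega⟩ = _
      simp only [Rm]
      rw [if_neg (by simp), one_mul]
      by_cases h0 : (0:ℕ) < n - 1
      · rw [if_pos (by simpa using h0)]
      · rw [if_neg (by simpa using h0), mul_one, nth_ge G q 0 (by omega), inv_one, mul_one]
  | succ k ih =>
      intro hk
      rw [pre_succ G n k hk, pre_succ G n k hk, ih (by omega)]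
      show _ * Rm G n 0 (n-1) (nth G q) p ⟨k+1, hk⟩ = _
      simp only [Rm]
      rw [if_pos (by omega), Nat.add_sub_cancel]
      by_cases hB : k + 1 < n - 1
      · rw [if_pos (by omega)]
        simp only [mul_assoc, inv_mul_cancel_left]
      · rw [if_neg (by omega), mul_one,
          nth_ge G q (k+1) (by omega), inv_one, mul_one]
        simp only [mul_assoc, inv_mul_cancel_left]

lemma Ginv_Fmap (q : Fin (n-1) → G) (p : Fin n → G) :
    Ginv G n p (Fmap G n q p) = q := by
  funext j
  have hj := j.isLt
  have hn : 1 ≤ n := by omega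
  show (pre G n (Fmap G n q p) (j:ℕ))⁻¹ * pre G n p (j:ℕ) = q j
  rw [pre_Fmap G n hn q p (j:ℕ) (by omega), nth_lt G q (j:ℕ) hj]
  rw [mul_inv_rev, inv_inv, mul_assoc, inv_mul_cancel, mul_one]

lemma Fmap_Ginv (hn : 1 ≤ n) (p y : Fin n → G)
    (h : pre G n y (n-1) = pre G n p (n-1)) :
    Fmap G n (Ginv G n p y) p = y := by
  funext j
  show Rm G n 0 (n-1) (nth G (Ginv G n p y)) p j = y j
  simp only [Rm, Nat.zero_add]
  rcases Nat.eq_zero_or_pos (j:ℕ) with hj0 | hj0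
  · rw [if_neg (by omega), one_mul]
    by_cases h0 : (0:ℕ) < n - 1
    · rw [if_pos (by omega), hj0, nth_lt G _ 0 h0]
      show p j * ((pre G n y 0)⁻¹ * pre G n p 0)⁻¹ = y j
      rw [pre_zero G n (by omega) y, pre_zero G n (by omega) p]
      have hpj : p j = p ⟨0, by omega⟩ := congrArg p (Fin.ext hj0)
      have hyj : y j = y ⟨0, by omega⟩ := congrArg y (Fin.ext hj0)
      rw [hpj, hyj, mul_inv_rev, inv_inv, mul_inv_cancel_left]
    · -- n = 1
      rw [if_neg (by omega), mul_one]
      have hy0 : pre G n y 0 = pre G n p 0 := by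
        have h' := h
        rw [show n - 1 = 0 from by omega] at h'
        exact h'
      rw [pre_zero G n (by omega) y, pre_zero G n (by omega) p] at hy0
      have hpj : p j = p ⟨0, by omega⟩ := congrArg p (Fin.ext hj0)
      have hyj : y j = y ⟨0, by omega⟩ := congrArg y (Fin.ext hj0)
      rw [hpj, hyj, hy0]
  · -- 0 < j
    have hjlt := j.isLt
    rw [if_pos (by omega)]
    have hpre : nth G (Ginv G n p y) ((j:ℕ) - 1)
        = (pre G n y ((j:ℕ)-1))⁻¹ * pre G n p ((j:ℕ)-1) := by
      rw [nth_lt G _ _ (show (j:ℕ)-1 < n-1 by omega)]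
      rfl
    rw [hpre]
    have hpp : pre G n p ((j:ℕ)-1) * p j = pre G n p (j:ℕ) :=
      (pre_pred G n (j:ℕ) hjlt hj0 p j rfl).symm
    have hyy : pre G n y ((j:ℕ)-1) * y j = pre G n y (j:ℕ) :=
      (pre_pred G n (j:ℕ) hjlt hj0 y j rfl).symm
    by_cases hB : (j:ℕ) < n - 1
    · rw [if_pos (by omega), nth_lt G _ _ hB]
      show (pre G n y ((j:ℕ)-1))⁻¹ * pre G n p ((j:ℕ)-1) * p j
          * ((pre G n y (j:ℕ))⁻¹ * pre G n p (j:ℕ))⁻¹ = y j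
      rw [mul_inv_rev, inv_inv, mul_assoc _ _ (p j), hpp]
      rw [mul_assoc, mul_inv_cancel_left, ← hyy, inv_mul_cancel_left]
    · rw [if_neg (by omega), mul_one]
      have hj1 : (j:ℕ) = n - 1 := by omega
      show (pre G n y ((j:ℕ)-1))⁻¹ * pre G n p ((j:ℕ)-1) * p j = y j
      rw [mul_assoc, hpp, hj1, ← h, ← hj1, ← hyy, inv_mul_cancel_left]

lemma ketbra_mul (y z y' z' : Fin n → G) :
    ketbra G n y z * ketbra G n y' z'
      = if z = y' then ketbra G n y z' else 0 := by
  apply LinearMap.ext; intro f; funext w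
  rw [Module.End.mul_apply, ketbra_apply]
  by_cases hz : z = y'
  · rw [if_pos hz, ketbra_apply, ketbra_apply, hz]
    by_cases hw : w = y <;> simp [hw]
  · rw [if_neg hz, ketbra_apply]
    by_cases hw : w = y <;> simp [hw, hz]

lemma one_eq_sum : (1 : Module.End ℂ (Hn G n)) = ∑ p : Fin n → G, ketbra G n p p := by
  apply LinearMap.ext; intro f; funext w
  rw [Module.End.one_apply, LinearMap.sum_apply, Finset.sum_apply]
  simp only [ketbra_apply]
  rw [Finset.sum_ite_eq Finset.univ w (fun p => f p)]
  simp

lemma nth_one (N k : ℕ) : nth G (fun _ : Fin N => (1:G)) k = 1 := by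
  unfold nth; split_ifs <;> rfl

lemma Fmap_one (p : Fin n → G) : Fmap G n (fun _ => (1:G)) p = p := by
  funext j
  show _ * p j * _ = p j
  simp only [nth_one, inv_one, ite_self, one_mul, mul_one]

lemma pre_Fmap_last (hn : 1 ≤ n) (q : Fin (n-1) → G) (p : Fin n → G) :
    pre G n (Fmap G n q p) (n-1) = pre G n p (n-1) := by
  rw [pre_Fmap G n hn q p (n-1) (by omega), nth_ge G q (n-1) (by omega), inv_one, mul_one]

lemma sigma_apply (i j x : Fin n) (hij : i ≠ j) (g : G) (p : Fin n → G) :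
    Function.update (Function.update p i (p i * g⁻¹)) j (g * p j) x
      = if x = j then g * p j else if x = i then p i * g⁻¹ else p x := by
  rcases eq_or_ne x j with rfl | hxj
  · rw [Function.update_self, if_pos rfl]
  · rw [Function.update_of_ne hxj, if_neg hxj]
    rcases eq_or_ne x i with rfl | hxi
    · rw [Function.update_self, if_pos rfl]
    · rw [Function.update_of_ne hxi, if_neg hxi]

lemma pre_sigma (i j : Fin n) (hij : (i:ℕ) + 1 = (j:ℕ)) (g : G) (p : Fin n → G) :
    ∀ k, k < n →
      pre G n (Function.update (Function.update p i (p i * g⁻¹)) j (g * p j)) k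
        = pre G n p k * (if k = (i:ℕ) then g⁻¹ else 1) := by
  have hij' : i ≠ j := Fin.ne_of_val_ne (by omega)
  intro k
  induction k with
  | zero =>
      intro hk
      rw [pre_zero G n hk, pre_zero G n hk, sigma_apply G n i j _ hij' g p,
        if_neg (Fin.ne_of_val_ne (show (0:ℕ) ≠ (j:ℕ) from by omega))]
      rcases eq_or_ne ((i:ℕ)) 0 with hi0 | hi0
      · rw [if_pos (Fin.ext (show (0:ℕ) = (i:ℕ) from hi0.symm)), if_pos hi0.symm]
        exact congrArg (fun t => t * g⁻¹) (congrArg p (Fin.ext hi0))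
      · rw [if_neg (Fin.ne_of_val_ne (show (0:ℕ) ≠ (i:ℕ) from fun hc => hi0 hc.symm)),
          if_neg (show ¬((0:ℕ) = (i:ℕ)) from fun hc => hi0 hc.symm), mul_one]
  | succ k ih =>
      intro hk
      rw [pre_succ G n k hk, pre_succ G n k hk, ih (by omega),
        sigma_apply G n i j _ hij' g p]
      rcases eq_or_ne (k+1) (j:ℕ) with hkj | hkj
      · have hki : k = (i:ℕ) := by omega
        rw [if_pos (Fin.ext (show (k+1:ℕ) = (j:ℕ) from hkj)), if_pos hki,
          if_neg (show ¬(k+1 = (i:ℕ)) from by omega), mul_one,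
          show p j = p ⟨k+1, hk⟩ from congrArg p (Fin.ext hkj.symm),
          mul_assoc, inv_mul_cancel_left]
      · rw [if_neg (Fin.ne_of_val_ne (show (k+1:ℕ) ≠ (j:ℕ) from hkj))]
        rcases eq_or_ne (k+1) ((i:ℕ)) with hki | hki
        · rw [if_pos (Fin.ext (show (k+1:ℕ) = (i:ℕ) from hki)),
            if_neg (show ¬(k = (i:ℕ)) from by omega), mul_one, if_pos hki,
            show p i = p ⟨k+1, hk⟩ from congrArg p (Fin.ext hki.symm), ← mul_assoc]
        · rw [if_neg (Fin.ne_of_val_ne (show (k+1:ℕ) ≠ (i:ℕ) from hki)),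
            if_neg (show ¬(k = (i:ℕ)) from by omega), if_neg hki, mul_one, mul_one]

/-- the family of words `Q̃^{(g₁)}_1 ⋯ Q̃^{(g_{n-1})}_{n-1} P^{h₁}_1 ⋯ P^{h_n}_n`
is a ℂ-basis of `𝔇ⁿ_rough`; in particular `dim_ℂ 𝔇ⁿ_rough = |G|^(2n-1)`. -/
theorem stmt4 (hn : 1 ≤ n) :
    LinearIndependent ℂ
      (fun qp : (Fin (n - 1) → G) × (Fin n → G) => roughWord G n qp.1 qp.2) ∧
    Submodule.span ℂ
        (Set.range fun qp : (Fin (n - 1) → G) × (Fin n → G) => roughWord G n qp.1 qp.2) =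
      Subalgebra.toSubmodule (DRough G n) ∧
    Module.finrank ℂ ↥(DRough G n) = Fintype.card G ^ (2 * n - 1) := by
  set v : (Fin (n - 1) → G) × (Fin n → G) → Module.End ℂ (Hn G n) :=
    fun qp => roughWord G n qp.1 qp.2 with hv
  have hinj : ∀ (p : Fin n → G) (q q' : Fin (n-1) → G),
      Fmap G n q p = Fmap G n q' p → q = q' := by
    intro p q q' hqq
    have h1 := Ginv_Fmap G n q p
    rw [hqq, Ginv_Fmap G n q' p] at h1
    exact h1.symm
  -- linear independence
  have hli : LinearIndependent ℂ v := by
    rw [Fintype.linearIndependent_iff]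
    intro c hc qp
    obtain ⟨q₀, p₀⟩ := qp
    have h2 := congrArg
      (fun T : Module.End ℂ (Hn G n) => T (ket G n p₀) (Fmap G n q₀ p₀)) hc
    simp only [LinearMap.sum_apply, Finset.sum_apply, LinearMap.smul_apply, Pi.smul_apply,
      smul_eq_mul, LinearMap.zero_apply, Pi.zero_apply] at h2
    have h3 : ∀ qp : (Fin (n - 1) → G) × (Fin n → G),
        v qp (ket G n p₀) (Fmap G n q₀ p₀)
          = if Fmap G n q₀ p₀ = Fmap G n qp.1 qp.2 then
              (if qp.2 = p₀ then (1:ℂ) else 0) else 0 := by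
      intro qp
      rw [hv]
      show roughWord G n qp.1 qp.2 (ket G n p₀) (Fmap G n q₀ p₀) = _
      rw [roughWord_eq G n hn, ketbra_apply]
      rfl
    rw [Finset.sum_congr rfl (fun qp _ => by rw [h3 qp])] at h2
    have h4 : ∑ qp : (Fin (n - 1) → G) × (Fin n → G),
        c qp * (if Fmap G n q₀ p₀ = Fmap G n qp.1 qp.2 then
          (if qp.2 = p₀ then (1:ℂ) else 0) else 0) = c (q₀, p₀) := by
      rw [Finset.sum_eq_single_of_mem (q₀, p₀) (Finset.mem_univ _)]
      · rw [if_pos rfl, if_pos rfl, mul_one]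
      · rintro ⟨q, p⟩ _ hb
        by_cases hp : p = p₀
        · subst hp
          by_cases hF : Fmap G n q₀ p = Fmap G n q p
          · exfalso
            exact hb (Prod.ext (hinj p q q₀ hF.symm) rfl)
          · rw [if_neg hF, mul_zero]
        · rw [if_neg hp, ite_self, mul_zero]
    rw [h4] at h2
    exact h2
  -- span
  have hspan : Submodule.span ℂ (Set.range v) = Subalgebra.toSubmodule (DRough G n) := by
    apply le_antisymm
    · rw [Submodule.span_le]
      rintro T ⟨⟨q, p⟩, rfl⟩
      show roughWord G n q p ∈ DRough G n
      unfold roughWord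
      apply mul_mem
      · apply Subalgebra.list_prod_mem
        intro x hx
        rw [List.mem_ofFn] at hx
        obtain ⟨i, rfl⟩ := hx
        apply Algebra.subset_adjoin
        right
        exact ⟨idx1 i, idx2 i, q i, by simp [idx1, idx2], rfl⟩
      · apply Subalgebra.list_prod_mem
        intro x hx
        rw [List.mem_ofFn] at hx
        obtain ⟨i, rfl⟩ := hx
        apply Algebra.subset_adjoin
        left
        exact ⟨i, p i, rfl⟩
    · -- DRough ≤ span
      have hketbra_mem : ∀ (p y : Fin n → G), pre G n y (n-1) = pre G n p (n-1) →
          ketbra G n y p ∈ Submodule.span ℂ (Set.range v) := by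
        intro p y hpre
        have he : ketbra G n y p = v (Ginv G n p y, p) := by
          rw [hv]
          show _ = roughWord G n _ p
          rw [roughWord_eq G n hn, Fmap_Ginv G n hn p y hpre]
        rw [he]
        exact Submodule.subset_span ⟨_, rfl⟩
      have hone : (1 : Module.End ℂ (Hn G n)) ∈ Submodule.span ℂ (Set.range v) := by
        rw [one_eq_sum G n]
        apply Submodule.sum_mem
        intro p _
        exact hketbra_mem p p rfl
      have hmul : ∀ x y : Module.End ℂ (Hn G n), x ∈ Submodule.span ℂ (Set.range v) →
          y ∈ Submodule.span ℂ (Set.range v) → x * y ∈ Submodule.span ℂ (Set.range v) := by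
        intro x y hx hy
        have hss : (Set.range v) * (Set.range v)
            ⊆ (Submodule.span ℂ (Set.range v) : Set (Module.End ℂ (Hn G n))) := by
          rintro z hz
          rw [Set.mem_mul] at hz
          obtain ⟨a, ⟨⟨q, p⟩, rfl⟩, b, ⟨⟨q', p'⟩, rfl⟩, rfl⟩ := hz
          show roughWord G n q p * roughWord G n q' p' ∈ _
          rw [roughWord_eq G n hn, roughWord_eq G n hn, ketbra_mul]
          by_cases hc : p = Fmap G n q' p'
          · rw [if_pos hc]
            apply hketbra_mem
            rw [pre_Fmap_last G n hn q p, hc, pre_Fmap_last G n hn q' p']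
          · rw [if_neg hc]; exact Submodule.zero_mem _
        have hle : Submodule.span ℂ (Set.range v) * Submodule.span ℂ (Set.range v)
            ≤ Submodule.span ℂ (Set.range v) := by
          rw [Submodule.span_mul_span]
          exact Submodule.span_le.mpr hss
        exact hle (Submodule.mul_mem_mul hx hy)
      have hgens : roughGens G n
          ⊆ ((Submodule.span ℂ (Set.range v)).toSubalgebra hone hmul :
              Set (Module.End ℂ (Hn G n))) := by
        rintro T (⟨i, h, rfl⟩ | ⟨i, j, g, hij, rfl⟩)
        · -- Pop
          show Pop G n i h ∈ Submodule.span ℂ (Set.range v)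
          have hP : Pop G n i h
              = ∑ p : Fin n → G, if p i = h then ketbra G n p p else 0 := by
            apply LinearMap.ext; intro f; funext w
            rw [LinearMap.sum_apply, Finset.sum_apply]
            have hterm : ∀ p : Fin n → G,
                ((if p i = h then ketbra G n p p else 0) f) w
                  = if w = p then (if p i = h then f p else 0) else 0 := by
              intro p
              by_cases hp : p i = h
              · rw [if_pos hp, ketbra_apply]
                by_cases hw : w = p <;> simp [hw, hp]
              · rw [if_neg hp]
                by_cases hw : w = p <;> simp [hw, hp]
            rw [Finset.sum_congr rfl fun p _ => hterm p,
              Finset.sum_ite_eq Finset.univ w (fun p => if p i = h then f p else 0)]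
            simp only [Finset.mem_univ, if_true]
            show (if w i = h then (1:ℂ) else 0) * f w = _
            by_cases hw : w i = h <;> simp [hw]
          rw [hP]
          apply Submodule.sum_mem
          intro p _
          by_cases hp : p i = h
          · rw [if_pos hp]
            exact hketbra_mem p p rfl
          · rw [if_neg hp]; exact Submodule.zero_mem _
        · -- Qop
          show Qop G n i j g ∈ Submodule.span ℂ (Set.range v)
          have hij' : i ≠ j := Fin.ne_of_val_ne (by omega)
          have hQ : Qop G n i j g
              = ∑ p : Fin n → G, ketbra G n
                  (Function.update (Function.update p i (p i * g⁻¹)) j (g * p j)) p := by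
            have h1 : Qop G n i j g = Qop G n i j g * 1 := by rw [mul_one]
            rw [h1, one_eq_sum G n, Finset.mul_sum]
            exact Finset.sum_congr rfl fun p _ => Qop_mul_ketbra G n i j hij' g p
          rw [hQ]
          apply Submodule.sum_mem
          intro p _
          apply hketbra_mem
          rw [pre_sigma G n i j hij g p (n-1) (by omega),
            if_neg (show ¬(n-1 = (i:ℕ)) from by have := j.isLt; omega), mul_one]
      intro T hT
      rw [Subalgebra.mem_toSubmodule] at hT
      exact Algebra.adjoin_le hgens hT
  refine ⟨hli, hspan, ?_⟩
  -- dimension count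
  have hcard : Fintype.card ((Fin (n - 1) → G) × (Fin n → G))
      = Fintype.card G ^ (2 * n - 1) := by
    rw [Fintype.card_prod, Fintype.card_fun, Fintype.card_fun, Fintype.card_fin,
      Fintype.card_fin, ← pow_add]
    congr 1
    omega
  have b := Module.Basis.span hli
  have h4 : Module.finrank ℂ ↥(Submodule.span ℂ (Set.range v))
      = Fintype.card ((Fin (n - 1) → G) × (Fin n → G)) :=
    Module.finrank_eq_card_basis b
  rw [hcard, hspan, Subalgebra.finrank_toSubmodule] at h4
  exact h4
end
end

section
/- For all (g_1,…,g_n) ∈ G^n and (h_1,…,h_{n−1}) ∈ G^{n−1}, the trace of the operator R^{g_1}_1 ⋯ R^{g_n}_n · S̃^{(h_1)}_1 ⋯ S̃^{(h_{n−1})}_{n−1} on H_n equals |G| if g_i = e for all i, and equals 0 otherwise. Consequently the normalized trace (1/|G|^n)·Tr takes the value |G|^{1−n} on such an operator when all g_i = e and 0 otherwise. -/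
noncomputable section

open scoped BigOperators

variable (G : Type) [Group G] [Fintype G] [DecidableEq G] (n : ℕ)

/-- `R^g_i`: right translation at site `i`, `|…, g_i, …⟩ ↦ |…, g_i g, …⟩`. -/
def Rop (i : Fin n) (g : G) : Module.End ℂ (Hn G n) :=
  permOp G n fun x => Function.update x i (x i * g⁻¹)

/-- `S̃^{(h)}` at sites `i` and `j` (used with `j = i + 1`): the projection onto
kets with `g_i⁻¹ g_j = h`. -/
def Sop (i j : Fin n) (h : G) : Module.End ℂ (Hn G n) :=
  diagOp G n fun x => if (x i)⁻¹ * x j = h then 1 else 0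

/-- `U_g`: the diagonal left translation `|g₁,…,g_n⟩ ↦ |g g₁,…,g g_n⟩`. -/
def Uop (g : G) : Module.End ℂ (Hn G n) :=
  permOp G n fun x k => g⁻¹ * x k

/-- Generators `R^g_i` and `S̃^{(h)}_i` of the smooth boundary algebra. -/
def smoothGens : Set (Module.End ℂ (Hn G n)) :=
  {T | ∃ (i : Fin n) (g : G), T = Rop G n i g} ∪
  {T | ∃ (i j : Fin n) (h : G), (i : ℕ) + 1 = (j : ℕ) ∧ T = Sop G n i j h}

/-- The smooth boundary algebra `𝔇ⁿ_smooth`. -/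
def DSmooth : Subalgebra ℂ (Module.End ℂ (Hn G n)) :=
  Algebra.adjoin ℂ (smoothGens G n)

/-- The word `R^{g₁}_1 ⋯ R^{g_n}_n · S̃^{(h₁)}_1 ⋯ S̃^{(h_{n-1})}_{n-1}`. -/
def smoothWord (g : Fin n → G) (h : Fin (n - 1) → G) : Module.End ℂ (Hn G n) :=
  (List.ofFn fun i : Fin n => Rop G n i (g i)).prod *
  (List.ofFn fun i : Fin (n - 1) => Sop G n (idx1 i) (idx2 i) (h i)).prod

/-!
The right translations combine into the permutation operator of `x ↦ (x_j g_j⁻¹)_j` and the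
projections `S̃` into the diagonal operator with entry `∏ᵢ [x_i⁻¹ x_{i+1} = h_i]`. The trace of
a permutation times a diagonal operator is the sum of the diagonal entries over the fixed points
of the permutation: there are none unless every `g_j = e`, and then the trace counts the tuples
with prescribed increments `x_i⁻¹ x_{i+1} = h_i`. Such a tuple is `x_1` times the partial products
of `h`, so there are `|G|` of them.
-/

open scoped Finset

theorem LinearMap.trace_eq_sum_apply_single {R ι : Type*} [CommRing R] [Fintype ι]
    [DecidableEq ι] (f : (ι → R) →ₗ[R] ι → R) :
    LinearMap.trace R (ι → R) f = ∑ i, f (Pi.single i 1) i := by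
  rw [LinearMap.trace_eq_matrix_trace R (Pi.basisFun R ι), LinearMap.toMatrix_eq_toMatrix']
  rfl

theorem Fin.card_filter_inv_mul_succ_eq {G : Type*} [Group G] [Fintype G] [DecidableEq G]
    {m : ℕ} (h : Fin m → G) :
    #{x : Fin (m + 1) → G | ∀ i, (x i.castSucc)⁻¹ * x i.succ = h i} = Fintype.card G := by
  refine (Finset.card_bij' (fun x _ => x 0) (fun a _ => a • Fin.partialProd h)
    (by simp) (fun a _ => ?_) (fun x hx => ?_) (fun a _ => by simp)).trans Finset.card_univ
  · simp [Fin.partialProd_right_inv]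
  · simp only [Finset.mem_filter] at hx
    conv_rhs => rw [← Fin.partialProd_left_inv x]
    simp [hx.2]

section Operators

variable {G : Type} {n : ℕ}

theorem permOp_mul (τ σ : (Fin n → G) → Fin n → G) :
    permOp G n τ * permOp G n σ = permOp G n (σ ∘ τ) :=
  rfl

theorem diagOp_list_prod (L : List ((Fin n → G) → ℂ)) :
    (L.map (diagOp G n)).prod = diagOp G n L.prod := by
  induction L with
  | nil => ext f x; simp [diagOp]
  | cons c L ih => ext f x; simp [ih, diagOp, mul_assoc]

theorem list_prod_map_Rop [Group G] (g : Fin n → G) (l : List (Fin n)) (hl : l.Nodup) :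
    (l.map fun i => Rop G n i (g i)).prod =
      permOp G n fun x j => if j ∈ l then x j * (g j)⁻¹ else x j := by
  induction l with
  | nil => ext f x; simp [permOp]
  | cons i l ih =>
    obtain ⟨hi, hl⟩ := List.nodup_cons.mp hl
    rw [List.map_cons, List.prod_cons, ih hl, Rop, permOp_mul]
    congr 1
    funext x j
    rcases eq_or_ne j i with rfl | hj <;> simp [*]

theorem smoothWord_eq [Group G] [DecidableEq G] (g : Fin n → G) (h : Fin (n - 1) → G) :
    smoothWord G n g h = permOp G n (fun x j => x j * (g j)⁻¹) *
      diagOp G n (fun x => ∏ i, if (x (idx1 i))⁻¹ * x (idx2 i) = h i then 1 else 0) := by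
  have hS : (List.ofFn fun i => Sop G n (idx1 i) (idx2 i) (h i)) =
      (List.ofFn fun i (x : Fin n → G) =>
        if (x (idx1 i))⁻¹ * x (idx2 i) = h i then (1 : ℂ) else 0).map (diagOp G n) := by
    rw [List.map_ofFn]
    rfl
  rw [smoothWord, List.ofFn_eq_map, list_prod_map_Rop g _ (List.nodup_finRange n), hS,
    diagOp_list_prod, List.prod_ofFn]
  simp only [List.mem_finRange, if_true, Finset.prod_fn]

theorem trace_permOp_mul_diagOp [Fintype G] [DecidableEq G] (τ : (Fin n → G) → Fin n → G)
    (c : (Fin n → G) → ℂ) :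
    LinearMap.trace ℂ (Hn G n) (permOp G n τ * diagOp G n c) = ∑ x with τ x = x, c x := by
  rw [LinearMap.trace_eq_sum_apply_single, Finset.sum_filter]
  refine Finset.sum_congr rfl fun x _ => ?_
  by_cases hx : τ x = x <;> simp [permOp, diagOp, Pi.single_apply, hx]

end Operators

/-- the trace of `R^{g₁}_1 ⋯ R^{g_n}_n S̃^{(h₁)}_1 ⋯ S̃^{(h_{n-1})}_{n-1}`
equals `|G|` if all `g_i = e` and `0` otherwise; consequently the normalized trace
`(1/|G|^n)·Tr` takes the value `|G|^{1-n}` in the first case and `0` otherwise. -/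
theorem stmt10 (hn : 1 ≤ n) (g : Fin n → G) (h : Fin (n - 1) → G) :
    LinearMap.trace ℂ (Hn G n) (smoothWord G n g h) =
      (if ∀ i, g i = 1 then (Fintype.card G : ℂ) else 0) ∧
    ((Fintype.card G : ℂ) ^ n)⁻¹ * LinearMap.trace ℂ (Hn G n) (smoothWord G n g h) =
      (if ∀ i, g i = 1 then ((Fintype.card G : ℂ) ^ (n - 1))⁻¹ else 0) := by
  obtain ⟨m, rfl⟩ : ∃ m, n = m + 1 := ⟨n - 1, by omega⟩
  have htr : LinearMap.trace ℂ (Hn G (m + 1)) (smoothWord G (m + 1) g h) =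
      if ∀ i, g i = 1 then (Fintype.card G : ℂ) else 0 := by
    rw [smoothWord_eq, trace_permOp_mul_diagOp]
    split_ifs with hg
    · simp only [hg, inv_one, mul_one, Finset.filter_true, Finset.prod_boole, Finset.mem_univ,
        true_implies, Finset.sum_boole]
      exact_mod_cast Fin.card_filter_inv_mul_succ_eq h
    · refine Finset.sum_eq_zero fun x hx => absurd (fun j => ?_) hg
      simpa using congrFun (Finset.mem_filter.mp hx).2 j
  have hc : (Fintype.card G : ℂ) ≠ 0 := Nat.cast_ne_zero.mpr Fintype.card_ne_zero
  refine ⟨htr, ?_⟩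
  rw [htr]
  split_ifs
  · rw [Nat.add_sub_cancel, pow_succ, mul_inv, mul_assoc, inv_mul_cancel₀ hc, mul_one]
  · rw [mul_zero]
end
end
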